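/- arXiv:2006.14964 — 7 statements merged into one kernel-verified Lean document; each statement's English description precedes it below -/
import Mathlib

section
/- Let G be a weighted undirected graph on n ≥ 2 vertices with integer edge capacities in which the total capacity of all edges is at least n·k and there are no self-loops. Then G contains a (k+1)-cluster: a subset C of at least 2 vertices such that the subgraph induced on C has edge connectivity at least k+1. -/
open Finset

noncomputable section

lemma inner_split {V : Type*} [Fintype V] [DecidableEq V] (c : V → V → ℕ)
    (hsym : ∀ u v, c u v = c v u) {S B : Finset V} (hB : B ⊆ S) :
    ∑ u ∈ S, ∑ v ∈ S, c u v
      = (∑ u ∈ B, ∑ v ∈ B, c u v) + (∑ u ∈ S \ B, ∑ v ∈ S \ B, c u v)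
        + 2 * ∑ u ∈ B, ∑ v ∈ S \ B, c u v := by
  have h1 : ∀ f : V → ℕ, ∑ u ∈ S, f u = ∑ u ∈ S \ B, f u + ∑ u ∈ B, f u :=
    fun f => (Finset.sum_sdiff hB).symm
  have hcross : ∑ u ∈ S \ B, ∑ v ∈ B, c u v = ∑ u ∈ B, ∑ v ∈ S \ B, c u v := by
    rw [Finset.sum_comm]
    simp_rw [hsym]
  calc ∑ u ∈ S, ∑ v ∈ S, c u v
      = ∑ u ∈ S \ B, ∑ v ∈ S, c u v + ∑ u ∈ B, ∑ v ∈ S, c u v := h1 _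
    _ = (∑ u ∈ S \ B, (∑ v ∈ S \ B, c u v + ∑ v ∈ B, c u v))
        + ∑ u ∈ B, (∑ v ∈ S \ B, c u v + ∑ v ∈ B, c u v) := by
        simp_rw [h1 (c _)]
    _ = _ := by
        rw [Finset.sum_add_distrib, Finset.sum_add_distrib, hcross]; ring

lemma aux_cluster {V : Type*} [Fintype V] [DecidableEq V] (c : V → V → ℕ) (k : ℕ)
    (hsym : ∀ u v, c u v = c v u) (hloop : ∀ v, c v v = 0) :
    ∀ n : ℕ, ∀ S : Finset V, S.card ≤ n →
      2 * (S.card - 1) * k < ∑ u ∈ S, ∑ v ∈ S, c u v →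
      ∃ C : Finset V, C ⊆ S ∧ 2 ≤ C.card ∧
        ∀ B ⊆ C, B.Nonempty → B ≠ C → k + 1 ≤ ∑ u ∈ B, ∑ v ∈ C \ B, c u v := by
  intro n
  induction n with
  | zero =>
    intro S hS h
    simp [Finset.card_eq_zero.mp (Nat.le_zero.mp hS)] at h
  | succ n ih =>
    intro S hS h
    -- first: S.card ≥ 2
    have hpos : 0 < ∑ u ∈ S, ∑ v ∈ S, c u v := Nat.lt_of_le_of_lt (Nat.zero_le _) h
    have hS2 : 2 ≤ S.card := by
      by_contra hlt
      push_neg at hlt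
      interval_cases hc : S.card
      · simp [Finset.card_eq_zero.mp hc] at hpos
      · obtain ⟨v, hv⟩ := Finset.card_eq_one.mp hc
        simp [hv, hloop] at hpos
    by_cases hcl : ∀ B ⊆ S, B.Nonempty → B ≠ S → k + 1 ≤ ∑ u ∈ B, ∑ v ∈ S \ B, c u v
    · exact ⟨S, Finset.Subset.refl S, hS2, hcl⟩
    · push_neg at hcl
      obtain ⟨B, hBS, hBne, hBneq, hcut⟩ := hcl
      have hcut' : ∑ u ∈ B, ∑ v ∈ S \ B, c u v ≤ k := Nat.lt_succ_iff.mp hcut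
      have hB'ne : (S \ B).Nonempty := by
        rw [Finset.sdiff_nonempty]
        intro hsub
        exact hBneq (Finset.Subset.antisymm hBS hsub)
      have hsplit := inner_split c hsym hBS
      have hcardB : 1 ≤ B.card := Finset.card_pos.mpr hBne
      have hcardB' : 1 ≤ (S \ B).card := Finset.card_pos.mpr hB'ne
      have hcards : B.card + (S \ B).card = S.card := by
        rw [Finset.card_sdiff_of_subset hBS]
        have := Finset.card_le_card hBS
        omega
      -- one of the two parts satisfies the slack inequality
      have key : 2 * (B.card - 1) * k < ∑ u ∈ B, ∑ v ∈ B, c u v ∨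
          2 * ((S \ B).card - 1) * k < ∑ u ∈ S \ B, ∑ v ∈ S \ B, c u v := by
        by_contra hno
        push_neg at hno
        obtain ⟨h1, h2⟩ := hno
        have hc1 : S.card - 1 = (B.card - 1) + ((S \ B).card - 1) + 1 := by omega
        rw [hc1] at h
        have hexp : 2 * ((B.card - 1) + ((S \ B).card - 1) + 1) * k
            = 2 * (B.card - 1) * k + 2 * ((S \ B).card - 1) * k + 2 * k := by ring
        omega
      have hcB : B.card ≤ n := by
        have : B.card < S.card := by omega
        omega
      have hcB' : (S \ B).card ≤ n := by
        have : (S \ B).card < S.card := by omega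
        omega
      rcases key with hkey | hkey
      · obtain ⟨C, hCsub, hC⟩ := ih B hcB hkey
        exact ⟨C, hCsub.trans hBS, hC⟩
      · obtain ⟨C, hCsub, hC⟩ := ih (S \ B) hcB' hkey
        exact ⟨C, hCsub.trans (Finset.sdiff_subset), hC⟩

/-- Total capacity crossing the cut `(A, Aᶜ)`: each unordered crossing pair
is counted once (for symmetric capacities). -/
def cutCap {V : Type*} [Fintype V] [DecidableEq V] (c : V → V → ℕ) (A : Finset V) : ℕ :=
  ∑ u ∈ A, ∑ v ∈ Aᶜ, c u v

/-- Local edge connectivity between `v` and `w`: the minimum capacity of a cut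
separating `v` from `w`. -/
def localConn {V : Type*} [Fintype V] [DecidableEq V] (c : V → V → ℕ) (v w : V) : ℕ :=
  sInf {m | ∃ A : Finset V, v ∈ A ∧ w ∉ A ∧ cutCap c A = m}

/-- Edge connectivity of the capacitated graph: the minimum capacity of a
nontrivial cut. -/
def edgeConn {V : Type*} [Fintype V] [DecidableEq V] (c : V → V → ℕ) : ℕ :=
  sInf {m | ∃ A : Finset V, A.Nonempty ∧ A ≠ Finset.univ ∧ cutCap c A = m}

/-- Weighted degree of a vertex: sum of capacities of incident edges. -/
def wdeg {V : Type*} [Fintype V] [DecidableEq V] (c : V → V → ℕ) (v : V) : ℕ :=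
  ∑ w, c v w

/-- (k+1)-cluster existence: if a loopless weighted undirected graph on `n ≥ 2`
vertices has total edge capacity at least `n·k` (double-counted sum at least
`2·n·k`), then there is a set `C` of at least two vertices such that the
subgraph induced on `C` has edge connectivity at least `k+1`, i.e. every
nontrivial cut of `C` has crossing capacity (within `C`) at least `k+1`. -/
theorem exists_cluster {V : Type*} [Fintype V] [DecidableEq V]
    (c : V → V → ℕ) (k : ℕ) (hk : 1 ≤ k) (hcard : 2 ≤ Fintype.card V)
    (hsym : ∀ u v, c u v = c v u) (hloop : ∀ v, c v v = 0)
    (htot : 2 * Fintype.card V * k ≤ ∑ u, ∑ v, c u v) :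
    ∃ C : Finset V, 2 ≤ C.card ∧
      ∀ B ⊆ C, B.Nonempty → B ≠ C → k + 1 ≤ ∑ u ∈ B, ∑ v ∈ C \ B, c u v := by
  have h : 2 * ((Finset.univ : Finset V).card - 1) * k < ∑ u ∈ Finset.univ, ∑ v ∈ Finset.univ, c u v := by
    rw [Finset.card_univ]
    have : 2 * (Fintype.card V - 1) * k < 2 * Fintype.card V * k := by
      have h1 : Fintype.card V - 1 < Fintype.card V := by omega
      have h2 : 2 * (Fintype.card V - 1) < 2 * Fintype.card V := by omega
      exact Nat.mul_lt_mul_of_lt_of_le h2 le_rfl (by omega)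
    exact lt_of_lt_of_le this htot
  obtain ⟨C, _, hC⟩ := aux_cluster c k hsym hloop (Finset.univ.card) Finset.univ le_rfl h
  exact ⟨C, hC⟩
end
end

section
/- In the min-flowNCG, every Nash equilibrium network has each agent spending its entire budget k: for every agent v, the sum of capacities of edges bought by v equals k. -/
open Finset

noncomputable section

/-- The undirected capacity induced by the bought (directed) capacities `b`. -/
def cap {V : Type*} (b : V → V → ℕ) : V → V → ℕ := fun u v => b u v + b v u

/-- A strategy profile is feasible for budget `k` if nobody buys a self-loop
and each agent's total bought capacity is at most `k`. -/
def Feasible {V : Type*} [Fintype V] (k : ℕ) (b : V → V → ℕ) : Prop :=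
  ∀ v, b v v = 0 ∧ ∑ w, b v w ≤ k

/-- Utility of agent `v` in the min-flowNCG: the lexicographic pair of the
edge connectivity of the network and the number of well-connected nodes. -/
def minUtil {V : Type*} [Fintype V] [DecidableEq V] (b : V → V → ℕ) (v : V) : ℕ × ℕ :=
  (edgeConn (cap b),
    Set.ncard {w | w ≠ v ∧ edgeConn (cap b) < localConn (cap b) v w})

/-- Nash equilibrium of the min-flowNCG: the profile is feasible and no agent
can strictly lexicographically improve its utility by a unilateral deviation. -/
def MinNE {V : Type*} [Fintype V] [DecidableEq V] (k : ℕ) (b : V → V → ℕ) : Prop :=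
  Feasible k b ∧ ∀ (v : V) (s : V → ℕ), s v = 0 → (∑ w, s w) ≤ k →
    ¬ Prod.Lex (· < ·) (· < ·) (minUtil b v) (minUtil (Function.update b v s) v)

/-- Utility of agent `v` in the avg-flowNCG: the average local edge
connectivity (max-flow value) from `v` to every other node. -/
def avgUtil {V : Type*} [Fintype V] [DecidableEq V] (b : V → V → ℕ) (v : V) : ℚ :=
  (∑ w ∈ Finset.univ.erase v, (localConn (cap b) v w : ℚ)) / ((Fintype.card V : ℚ) - 1)

/-- Nash equilibrium of the avg-flowNCG: the profile is feasible and no agent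
can strictly increase its utility by a unilateral deviation. -/
def AvgNE {V : Type*} [Fintype V] [DecidableEq V] (k : ℕ) (b : V → V → ℕ) : Prop :=
  Feasible k b ∧ ∀ (v : V) (s : V → ℕ), s v = 0 → (∑ w, s w) ≤ k →
    avgUtil (Function.update b v s) v ≤ avgUtil b v


lemma aux_sum_ind {V : Type*} [DecidableEq V] (a b : V) (s t : Finset V) :
    (∑ x ∈ s, ∑ y ∈ t, (if x = a ∧ y = b then (1:ℕ) else 0)) = if a ∈ s ∧ b ∈ t then 1 else 0 := by
  simp only [ite_and]
  have h : ∀ x, (∑ y ∈ t, (if x = a then if y = b then (1:ℕ) else 0 else 0))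
      = if x = a then (if b ∈ t then 1 else 0) else 0 := by
    intro x; by_cases hx : x = a <;> simp [hx, Finset.sum_ite_eq']
  rw [Finset.sum_congr rfl fun x _ => h x, Finset.sum_ite_eq' s a]

lemma cutCap_add_ite {V : Type*} [Fintype V] [DecidableEq V] (c : V → V → ℕ) (v u : V) (B : Finset V) :
    cutCap (fun x y => c x y + ((if x = v ∧ y = u then 1 else 0) + (if x = u ∧ y = v then 1 else 0))) B
      = cutCap c B + ((if v ∈ B ∧ u ∉ B then 1 else 0) + (if u ∈ B ∧ v ∉ B then 1 else 0)) := by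
  unfold cutCap
  simp only [Finset.sum_add_distrib, aux_sum_ind, Finset.mem_compl]

lemma cutCap_compl {V : Type*} [Fintype V] [DecidableEq V] (c : V → V → ℕ)
    (hs : ∀ x y, c x y = c y x) (A : Finset V) : cutCap c Aᶜ = cutCap c A := by
  unfold cutCap
  rw [compl_compl, Finset.sum_comm]
  exact Finset.sum_congr rfl fun x _ => Finset.sum_congr rfl fun y _ => hs y x

/-- In the min-flowNCG, every agent spends its entire budget in a Nash
equilibrium: the total capacity bought by each agent equals `k`. -/
theorem minNE_full_budget {V : Type*} [Fintype V] [DecidableEq V]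
    (k : ℕ) (b : V → V → ℕ) (hk : k < Fintype.card V)
    (hne : MinNE k b) :
    ∀ v : V, ∑ w, b v w = k := by
  intro v
  obtain ⟨hfeas, hNE⟩ := hne
  by_contra hcon
  have hlt : ∑ w, b v w < k := lt_of_le_of_ne (hfeas v).2 hcon
  have hk1 : 1 ≤ k := by omega
  have hcard : 2 ≤ Fintype.card V := by omega
  set c : V → V → ℕ := cap b with hc
  have hsym : ∀ x y, c x y = c y x := fun x y => add_comm _ _
  have hvuniv : ({v} : Finset V) ≠ Finset.univ := by
    intro h
    have h1 : Fintype.card V = 1 := by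
      rw [← Finset.card_univ, ← h, Finset.card_singleton]
    omega
  have hsetne : {m | ∃ A : Finset V, A.Nonempty ∧ A ≠ Finset.univ ∧ cutCap c A = m}.Nonempty :=
    ⟨cutCap c {v}, {v}, ⟨v, Finset.mem_singleton_self v⟩, hvuniv, rfl⟩
  obtain ⟨A0, hA0ne, hA0univ, hA0cut⟩ := Nat.sInf_mem hsetne
  obtain ⟨A, hvA, hAuniv, hAcut⟩ :
      ∃ A : Finset V, v ∈ A ∧ A ≠ Finset.univ ∧ cutCap c A = edgeConn c := by
    by_cases hv : v ∈ A0
    · exact ⟨A0, hv, hA0univ, hA0cut⟩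
    · obtain ⟨x, hx⟩ := hA0ne
      refine ⟨A0ᶜ, Finset.mem_compl.2 hv, ?_, ?_⟩
      · intro h
        have : x ∈ A0ᶜ := h ▸ Finset.mem_univ x
        exact (Finset.mem_compl.1 this) hx
      · rw [cutCap_compl c hsym A0]; exact hA0cut
  obtain ⟨u, huA⟩ : ∃ u, u ∉ A := by
    by_contra h
    push_neg at h
    exact hAuniv (Finset.eq_univ_iff_forall.2 h)
  have huv : u ≠ v := fun h => huA (h ▸ hvA)
  set s : V → ℕ := fun w => b v w + if w = u then 1 else 0 with hs
  have hsv : s v = 0 := by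
    simp only [hs, (hfeas v).1, if_neg (Ne.symm huv), add_zero]
  have hssum : ∑ w, s w ≤ k := by
    have : ∑ w, s w = (∑ w, b v w) + 1 := by
      rw [hs, Finset.sum_add_distrib, Finset.sum_ite_eq' Finset.univ u (fun _ => 1)]
      simp
    omega
  set c' : V → V → ℕ := cap (Function.update b v s) with hc'
  have hc'eq : ∀ x y, c' x y
      = c x y + ((if x = v ∧ y = u then 1 else 0) + (if x = u ∧ y = v then 1 else 0)) := by
    intro x y
    simp only [hc', hc, cap, Function.update, hs]
    rcases eq_or_ne x v with hx | hx <;> rcases eq_or_ne y v with hy | hy <;>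
      simp [hx, hy, huv, Ne.symm huv, (hfeas v).1] <;> omega
  have hkey : ∀ B : Finset V, cutCap c' B
      = cutCap c B + ((if v ∈ B ∧ u ∉ B then 1 else 0) + (if u ∈ B ∧ v ∉ B then 1 else 0)) := by
    intro B
    rw [show cutCap c' B = cutCap (fun x y => c x y +
        ((if x = v ∧ y = u then 1 else 0) + (if x = u ∧ y = v then 1 else 0))) B from
      Finset.sum_congr rfl fun x _ => Finset.sum_congr rfl fun y _ => hc'eq x y]
    exact cutCap_add_ite c v u B
  have hmono : ∀ B : Finset V, cutCap c B ≤ cutCap c' B := by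
    intro B; rw [hkey B]; omega
  have hsep : ∀ B : Finset V, v ∈ B → u ∉ B → cutCap c' B = cutCap c B + 1 := by
    intro B h1 h2
    rw [hkey B, if_pos ⟨h1, h2⟩, if_neg (fun h => h2 h.1)]
  -- edge connectivity does not decrease
  have hE'ne : {m | ∃ B : Finset V, B.Nonempty ∧ B ≠ Finset.univ ∧ cutCap c' B = m}.Nonempty :=
    ⟨cutCap c' {v}, {v}, ⟨v, Finset.mem_singleton_self v⟩, hvuniv, rfl⟩
  obtain ⟨B0, hB0ne, hB0univ, hB0cut⟩ := Nat.sInf_mem hE'ne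
  have hEle : edgeConn c ≤ edgeConn c' := by
    calc edgeConn c ≤ cutCap c B0 := Nat.sInf_le ⟨B0, hB0ne, hB0univ, rfl⟩
      _ ≤ cutCap c' B0 := hmono B0
      _ = edgeConn c' := hB0cut
  -- local connectivity facts
  have hsetw : ∀ (d : V → V → ℕ) (w : V), w ≠ v →
      {m | ∃ B : Finset V, v ∈ B ∧ w ∉ B ∧ cutCap d B = m}.Nonempty := by
    intro d w hw
    exact ⟨cutCap d {v}, {v}, Finset.mem_singleton_self v,
      fun h => hw (Finset.mem_singleton.1 h), rfl⟩
  have hloc_mono : ∀ w, w ≠ v → localConn c v w ≤ localConn c' v w := by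
    intro w hw
    obtain ⟨B, h1, h2, h3⟩ := Nat.sInf_mem (hsetw c' w hw)
    calc localConn c v w ≤ cutCap c B := Nat.sInf_le ⟨B, h1, h2, rfl⟩
      _ ≤ cutCap c' B := hmono B
      _ = localConn c' v w := h3
  have hloc_u : localConn c' v u = localConn c v u + 1 := by
    apply le_antisymm
    · obtain ⟨B, h1, h2, h3⟩ := Nat.sInf_mem (hsetw c u huv)
      have := hsep B h1 h2
      calc localConn c' v u ≤ cutCap c' B := Nat.sInf_le ⟨B, h1, h2, rfl⟩
        _ = cutCap c B + 1 := this
        _ = localConn c v u + 1 := by rw [h3]; rfl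
    · obtain ⟨B, h1, h2, h3⟩ := Nat.sInf_mem (hsetw c' u huv)
      have h3' : cutCap c' B = localConn c' v u := h3
      have h4 : localConn c v u ≤ cutCap c B := Nat.sInf_le ⟨B, h1, h2, rfl⟩
      have h5 := hsep B h1 h2
      omega
  have hloc_ueq : localConn c v u = edgeConn c := by
    apply le_antisymm
    · rw [← hAcut]; exact Nat.sInf_le ⟨A, hvA, huA, rfl⟩
    · obtain ⟨B, h1, h2, h3⟩ := Nat.sInf_mem (hsetw c u huv)
      have h3' : cutCap c B = localConn c v u := h3
      rw [← h3']
      exact Nat.sInf_le ⟨B, ⟨v, h1⟩, fun h => h2 (h ▸ Finset.mem_univ u), rfl⟩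
  -- the deviation improves lexicographically: contradiction
  refine hNE v s hsv hssum ?_
  have hmu : minUtil b v = (edgeConn c,
      Set.ncard {w | w ≠ v ∧ edgeConn c < localConn c v w}) := rfl
  have hmu' : minUtil (Function.update b v s) v = (edgeConn c',
      Set.ncard {w | w ≠ v ∧ edgeConn c' < localConn c' v w}) := rfl
  rw [hmu, hmu']
  rcases lt_or_eq_of_le hEle with hlt' | heq
  · exact Prod.Lex.left _ _ hlt'
  · rw [← heq]
    refine Prod.Lex.right _ ?_
    have hsub : {w | w ≠ v ∧ edgeConn c < localConn c v w}
        ⊆ {w | w ≠ v ∧ edgeConn c < localConn c' v w} := by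
      rintro w ⟨hw1, hw2⟩
      exact ⟨hw1, lt_of_lt_of_le hw2 (hloc_mono w hw1)⟩
    have hu_in : u ∈ {w | w ≠ v ∧ edgeConn c < localConn c' v w} := by
      refine ⟨huv, ?_⟩
      rw [hloc_u, hloc_ueq]
      omega
    have hu_out : u ∉ {w | w ≠ v ∧ edgeConn c < localConn c v w} := by
      rintro ⟨-, h2⟩
      rw [hloc_ueq] at h2
      exact lt_irrefl _ h2
    refine Set.ncard_lt_ncard ⟨hsub, fun h => hu_out (h hu_in)⟩ (Set.toFinite _)
end
end

section
/- In the avg-flowNCG, every Nash equilibrium network is connected. -/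
open Finset

noncomputable section

/-!
Suppose the network is disconnected and pick `v`, `w` in different components `X ∋ v` and
`Y ∋ w` with `|X| ≤ |Y|`. Let `v` move one unit of its capacity (or, if it bought nothing, spend
one unit) onto the edge `vw`. Every cut loses at most one unit of capacity, so `v` loses at most
`1` towards each of the `|X| - 1` other vertices of `X`, and nothing elsewhere, its connectivity to
vertices outside `X` being `0` already; but it gains at least `1` towards each of the `|Y|`
vertices of `Y`, which it now reaches. Hence the deviation is strictly profitable.
-/

section CutCapacity

variable {V : Type*}

lemma cap_add (b b' : V → V → ℕ) : cap (b + b') = cap b + cap b' := by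
  ext x y
  simp only [cap, Pi.add_apply]
  ring

lemma cap_mono {b b' : V → V → ℕ} (h : b ≤ b') : cap b ≤ cap b' :=
  fun x y ↦ add_le_add (h x y) (h y x)

variable [Fintype V] [DecidableEq V]

lemma le_cutCap {c : V → V → ℕ} {A : Finset V} {x y : V} (hx : x ∈ A) (hy : y ∉ A) :
    c x y ≤ cutCap c A :=
  calc c x y ≤ ∑ z ∈ Aᶜ, c x z := single_le_sum (fun _ _ ↦ Nat.zero_le _) (mem_compl.2 hy)
    _ ≤ cutCap c A := single_le_sum (f := fun x ↦ ∑ z ∈ Aᶜ, c x z) (fun _ _ ↦ Nat.zero_le _) hx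

lemma cutCap_mono {c c' : V → V → ℕ} (h : c ≤ c') (A : Finset V) : cutCap c A ≤ cutCap c' A :=
  sum_le_sum fun x _ ↦ sum_le_sum fun y _ ↦ h x y

lemma cutCap_add (c c' : V → V → ℕ) (A : Finset V) :
    cutCap (c + c') A = cutCap c A + cutCap c' A := by
  simp only [cutCap, Pi.add_apply, sum_add_distrib]

lemma cutCap_cap_le_sum (d : V → V → ℕ) (A : Finset V) :
    cutCap (cap d) A ≤ ∑ x, ∑ y, d x y := by
  have hdisj : Disjoint (A ×ˢ Aᶜ) (Aᶜ ×ˢ A) :=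
    disjoint_product.2 (Or.inl disjoint_compl_right)
  calc cutCap (cap d) A = ∑ p ∈ A ×ˢ Aᶜ ∪ Aᶜ ×ˢ A, d p.1 p.2 := by
        rw [sum_union hdisj, sum_product, sum_product, sum_comm (s := Aᶜ)]
        simp only [cutCap, cap, sum_add_distrib]
    _ ≤ ∑ p : V × V, d p.1 p.2 := sum_le_sum_of_subset (subset_univ _)
    _ = ∑ x, ∑ y, d x y := Fintype.sum_prod_type _

lemma cutCap_cap_le_add {b b' d : V → V → ℕ} (h : b ≤ b' + d) (A : Finset V) :
    cutCap (cap b) A ≤ cutCap (cap b') A + ∑ x, ∑ y, d x y :=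
  calc cutCap (cap b) A ≤ cutCap (cap b' + cap d) A := cutCap_mono (cap_add b' d ▸ cap_mono h) A
    _ = cutCap (cap b') A + cutCap (cap d) A := cutCap_add _ _ A
    _ ≤ cutCap (cap b') A + ∑ x, ∑ y, d x y := Nat.add_le_add_left (cutCap_cap_le_sum d A) _

lemma localConn_le_cutCap {c : V → V → ℕ} {v w : V} {A : Finset V} (hv : v ∈ A) (hw : w ∉ A) :
    localConn c v w ≤ cutCap c A :=
  Nat.sInf_le ⟨A, hv, hw, rfl⟩

lemma exists_cutCap_eq_localConn (c : V → V → ℕ) {v w : V} (hvw : v ≠ w) :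
    ∃ A : Finset V, v ∈ A ∧ w ∉ A ∧ cutCap c A = localConn c v w :=
  Nat.sInf_mem (s := {m | ∃ A : Finset V, v ∈ A ∧ w ∉ A ∧ cutCap c A = m})
    ⟨cutCap c {v}, {v}, mem_singleton_self v, by simpa using hvw.symm, rfl⟩

lemma localConn_cap_le_add {b b' d : V → V → ℕ} (h : b ≤ b' + d) {v w : V} (hvw : v ≠ w) :
    localConn (cap b) v w ≤ localConn (cap b') v w + ∑ x, ∑ y, d x y := by
  obtain ⟨A, hv, hw, hA⟩ := exists_cutCap_eq_localConn (cap b') hvw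
  calc localConn (cap b) v w ≤ cutCap (cap b) A := localConn_le_cutCap hv hw
    _ ≤ cutCap (cap b') A + ∑ x, ∑ y, d x y := cutCap_cap_le_add h A
    _ = localConn (cap b') v w + ∑ x, ∑ y, d x y := by rw [hA]

end CutCapacity

def boughtGraph {V : Type*} (b : V → V → ℕ) : SimpleGraph V :=
  SimpleGraph.fromRel fun x y ↦ 0 < b x y

section BoughtGraph

variable {V : Type*} {b : V → V → ℕ} {v w : V}

lemma boughtGraph_adj {x y : V} : (boughtGraph b).Adj x y ↔ x ≠ y ∧ 0 < cap b x y := by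
  simp only [boughtGraph, SimpleGraph.fromRel_adj, cap, Nat.add_pos_iff_pos_or_pos]

lemma SimpleGraph.Reachable.mono_of_not_reachable {G H : SimpleGraph V} {z : V}
    (hGH : ∀ x y, x ≠ v → y ≠ v → G.Adj x y → H.Adj x y)
    (h : G.Reachable w z) (hv : ¬ G.Reachable w v) : H.Reachable w z := by
  obtain ⟨p⟩ := h
  induction p with
  | nil => rfl
  | @cons x y z hxy p ih =>
    have hx : x ≠ v := by rintro rfl; exact hv .rfl
    have hy : y ≠ v := by rintro rfl; exact hv hxy.reachable
    exact (hGH x y hx hy hxy).reachable.trans (ih fun h ↦ hv (hxy.reachable.trans h))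

variable [DecidableEq V]

lemma reachable_boughtGraph_update {s : V → ℕ} {z : V} (hvw : ¬ (boughtGraph b).Reachable v w)
    (hs : 0 < s w) (hz : (boughtGraph b).Reachable w z) :
    (boughtGraph (Function.update b v s)).Reachable v z := by
  have hne : v ≠ w := by rintro rfl; exact hvw .rfl
  have hadj : (boughtGraph (Function.update b v s)).Adj v w :=
    boughtGraph_adj.2 ⟨hne, by simp [cap, hne.symm, hs]⟩
  refine hadj.reachable.trans (hz.mono_of_not_reachable ?_ (hvw ·.symm))
  intro x y hx hy hxy
  rw [boughtGraph_adj] at hxy ⊢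
  simpa [cap, hx, hy] using hxy

variable [Fintype V]

lemma localConn_cap_pos (h : (boughtGraph b).Reachable v w) (hvw : v ≠ w) :
    0 < localConn (cap b) v w := by
  obtain ⟨A, hv, hw, hA⟩ := exists_cutCap_eq_localConn (cap b) hvw
  obtain ⟨p⟩ := h
  obtain ⟨d, -, hx, hy⟩ := p.exists_boundary_dart (A : Set V) hv hw
  exact hA ▸ (boughtGraph_adj.1 d.adj).2.trans_le (le_cutCap hx hy)

lemma localConn_cap_eq_zero (h : ¬ (boughtGraph b).Reachable v w) : localConn (cap b) v w = 0 := by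
  classical
  set X : Finset V := {z | (boughtGraph b).Reachable v z}
  have hX : cutCap (cap b) X = 0 := by
    refine sum_eq_zero fun x hx ↦ sum_eq_zero fun y hy ↦ Nat.eq_zero_of_not_pos fun hxy ↦ ?_
    simp only [X, mem_compl, mem_filter, mem_univ, true_and] at hx hy
    exact hy (hx.trans (boughtGraph_adj.2 ⟨by rintro rfl; exact hy hx, hxy⟩).reachable)
  exact Nat.eq_zero_of_le_zero (hX ▸ localConn_le_cutCap (by simp [X]) (by simpa [X] using h))

lemma edgeConn_cap_pos [Nontrivial V] (h : (boughtGraph b).Preconnected) :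
    0 < edgeConn (cap b) := by
  obtain ⟨x, y, hxy⟩ := exists_pair_ne V
  have hcut : {x} ≠ (univ : Finset V) := fun h ↦
    hxy (mem_singleton.1 (eq_univ_iff_forall.1 h y)).symm
  obtain ⟨A, ⟨v, hv⟩, hA, hcap⟩ :=
    Nat.sInf_mem (s := {m | ∃ A : Finset V, A.Nonempty ∧ A ≠ univ ∧ cutCap (cap b) A = m})
      ⟨_, {x}, singleton_nonempty x, hcut, rfl⟩
  obtain ⟨w, hw⟩ := by simpa [eq_univ_iff_forall] using hA
  rw [edgeConn, ← hcap]
  exact (localConn_cap_pos (h v w) (ne_of_mem_of_not_mem hv hw)).trans_le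
    (localConn_le_cutCap hv hw)

end BoughtGraph

lemma Finset.sum_erase_lt_sum_erase {α : Type*} [Fintype α] [DecidableEq α] {f g : α → ℕ}
    {X Y : Finset α} {v : α} (hv : v ∈ X) (hXY : Disjoint X Y) (hcard : #X ≤ #Y)
    (hf : ∀ z ∉ X, f z = 0) (hfg : ∀ z ≠ v, f z ≤ g z + 1) (hg : ∀ z ∈ Y, 1 ≤ g z) :
    ∑ z ∈ univ.erase v, f z < ∑ z ∈ univ.erase v, g z := by
  have hvY : v ∉ Y := disjoint_left.1 hXY hv
  have hX : 0 < #X := card_pos.2 ⟨v, hv⟩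
  calc ∑ z ∈ univ.erase v, f z = ∑ z ∈ X.erase v, f z :=
        (sum_subset (erase_subset_erase v (subset_univ X)) fun z hz hzX ↦
          hf z fun hz' ↦ hzX (mem_erase.2 ⟨ne_of_mem_erase hz, hz'⟩)).symm
    _ ≤ ∑ z ∈ X.erase v, (g z + 1) := sum_le_sum fun z hz ↦ hfg z (ne_of_mem_erase hz)
    _ = ∑ z ∈ X.erase v, g z + (#X - 1) := by
        rw [sum_add_distrib, sum_const, card_erase_of_mem hv, smul_eq_mul, mul_one]
    _ < ∑ z ∈ X.erase v, g z + #Y := by omega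
    _ ≤ ∑ z ∈ X.erase v, g z + ∑ z ∈ Y, g z := by
        gcongr
        simpa using card_nsmul_le_sum Y g 1 hg
    _ = ∑ z ∈ X.erase v ∪ Y, g z :=
        (sum_union (disjoint_of_subset_left (erase_subset v X) hXY)).symm
    _ ≤ ∑ z ∈ univ.erase v, g z := sum_le_sum_of_subset (union_subset
        (erase_subset_erase v (subset_univ X)) fun z hz ↦
          mem_erase.2 ⟨fun h ↦ hvY (h ▸ hz), mem_univ z⟩)

lemma exists_redirect {V : Type*} [Fintype V] [DecidableEq V] {f : V → ℕ} {k : ℕ} {v w : V}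
    (hvw : v ≠ w) (hv : f v = 0) (hw : f w = 0) (hf : ∑ z, f z ≤ k) (hk : 1 ≤ k) :
    ∃ s e : V → ℕ, s v = 0 ∧ ∑ z, s z ≤ k ∧ 0 < s w ∧ f ≤ s + e ∧ ∑ z, e z ≤ 1 := by
  by_cases hpos : ∃ u, 0 < f u
  · obtain ⟨u, hu⟩ := hpos
    have huv : u ≠ v := by rintro rfl; omega
    have huw : u ≠ w := by rintro rfl; omega
    have hle : Pi.single u 1 ≤ f + Pi.single w 1 := fun z ↦ by
      rcases eq_or_ne z u with rfl | hz
      · simpa [huw] using Nat.one_le_iff_ne_zero.2 hu.ne'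
      · simp [hz]
    refine ⟨f + Pi.single w 1 - Pi.single u 1, Pi.single u 1, ?_, ?_, ?_, ?_, by simp⟩
    · simp [hv, hvw, huv.symm]
    · simp only [Pi.sub_apply]
      rw [sum_tsub_distrib _ fun z _ ↦ hle z]
      simp only [Pi.add_apply, sum_add_distrib, sum_pi_single', mem_univ, if_true]
      omega
    · simp [hw, huw.symm]
    · exact fun z ↦ le_self_add.trans le_tsub_add
  · push Not at hpos
    refine ⟨Pi.single w 1, 0, by simp [hvw], by simpa using hk, by simp,
      fun z ↦ (hpos z).trans (Nat.zero_le _), by simp⟩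

open Classical in
lemma exists_profitable_deviation {V : Type*} [Fintype V] [DecidableEq V] {k : ℕ}
    {b : V → V → ℕ} {v w : V} (hb : Feasible k b) (hk : 1 ≤ k)
    (hvw : ¬ (boughtGraph b).Reachable v w)
    (hcard : #{z | (boughtGraph b).Reachable v z} ≤ #{z | (boughtGraph b).Reachable w z}) :
    ∃ s : V → ℕ, s v = 0 ∧ ∑ z, s z ≤ k ∧ avgUtil b v < avgUtil (Function.update b v s) v := by
  have hne : v ≠ w := by rintro rfl; exact hvw .rfl
  have hbw : b v w = 0 := by
    by_contra h
    exact hvw (boughtGraph_adj.2 ⟨hne, by simp only [cap]; omega⟩).reachable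
  obtain ⟨s, e, hsv, hsk, hsw, hbs, he⟩ := exists_redirect hne (hb v).1 hbw (hb v).2 hk
  set b' := Function.update b v s
  have hbb' : b ≤ b' + Pi.single v e := fun x ↦ by
    rcases eq_or_ne x v with rfl | hx <;> simp [b', *]
  have hloss : ∀ z ≠ v, localConn (cap b) v z ≤ localConn (cap b') v z + 1 := fun z hz ↦
    (localConn_cap_le_add hbb' hz.symm).trans <| by
      rw [Fintype.sum_eq_single v fun x hx ↦ by simp [hx]]
      simpa using he
  have hgain : ∀ z, (boughtGraph b).Reachable w z → 1 ≤ localConn (cap b') v z := fun z hz ↦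
    localConn_cap_pos (reachable_boughtGraph_update hvw hsw hz) fun h ↦ hvw (h ▸ hz.symm)
  refine ⟨s, hsv, hsk, ?_⟩
  have hV : (1 : ℚ) < Fintype.card V := by exact_mod_cast Fintype.one_lt_card_iff.2 ⟨v, w, hne⟩
  rw [avgUtil, avgUtil, div_lt_div_iff_of_pos_right (by linarith)]
  have hdisj : Disjoint ({z | (boughtGraph b).Reachable v z} : Finset V)
      ({z | (boughtGraph b).Reachable w z} : Finset V) :=
    disjoint_filter.2 fun z _ hvz hwz ↦ hvw (hvz.trans hwz.symm)
  exact_mod_cast sum_erase_lt_sum_erase (by simp) hdisj hcard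
    (by simpa using fun z ↦ localConn_cap_eq_zero) hloss (by simpa using hgain)

/-- In the avg-flowNCG, every Nash equilibrium network is connected, i.e. the
resulting undirected capacitated graph has positive edge connectivity. -/
theorem avgNE_connected {V : Type*} [Fintype V] [DecidableEq V]
    (k : ℕ) (b : V → V → ℕ)
    (hk1 : 1 ≤ k) (hk : k < Fintype.card V)
    (hne : AvgNE k b) :
    0 < edgeConn (cap b) := by
  have : Nontrivial V := Fintype.one_lt_card_iff_nontrivial.1 (by omega)
  refine edgeConn_cap_pos fun v w ↦ ?_
  by_contra hvw
  classical
  wlog hcard : #{z | (boughtGraph b).Reachable v z} ≤ #{z | (boughtGraph b).Reachable w z}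
    generalizing v w
  · exact this w v (hvw ·.symm) (by omega)
  obtain ⟨s, hs, hsk, hlt⟩ := exists_profitable_deviation hne.1 hk1 hvw hcard
  exact (hne.2 v s hs hsk).not_gt hlt
end
end

section
/- The directed cycle in which every agent buys a single edge of capacity k to the next agent is a Nash equilibrium of the min-flowNCG, and its social utility is 2k. -/
open Finset

noncomputable section

namespace CycleAux

variable {n : ℕ}

/-- successor on `Fin n`. -/
def fsucc (i : Fin n) : Fin n := ⟨(i.val + 1) % n, Nat.mod_lt _ i.pos⟩

lemma fsucc_val (i : Fin n) : (fsucc i).val = (i.val + 1) % n := rfl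

lemma fsucc_val_cases (i : Fin n) :
    (fsucc i).val = if i.val + 1 = n then 0 else i.val + 1 := by
  rw [fsucc_val]
  split
  · simp [*]
  · exact Nat.mod_eq_of_lt (by omega)

lemma fsucc_ne (hn : 2 ≤ n) (i : Fin n) : fsucc i ≠ i := by
  have h := fsucc_val_cases i
  have := i.isLt
  intro he
  rw [he] at h
  split at h <;> omega

lemma fsucc_inj : Function.Injective (fsucc (n := n)) := by
  intro a b hab
  have ha := fsucc_val_cases a
  have hb := fsucc_val_cases b
  have h : (fsucc a).val = (fsucc b).val := by rw [hab]
  have := a.isLt; have := b.isLt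
  apply Fin.ext
  rw [ha, hb] at h
  split at h <;> split at h <;> omega

lemma fsucc_surj : Function.Surjective (fsucc (n := n)) :=
  Finite.injective_iff_surjective.mp fsucc_inj

lemma closure (A : Finset (Fin n)) (hA : A.Nonempty)
    (h : ∀ u ∈ A, fsucc u ∈ A) : A = univ := by
  obtain ⟨a, ha⟩ := hA
  have key : ∀ m, ∀ x : Fin n, x.val = (a.val + m) % n → x ∈ A := by
    intro m
    induction m with
    | zero =>
      intro x hx
      have : x = a := Fin.ext (by simpa [Nat.mod_eq_of_lt a.isLt] using hx)
      rwa [this]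
    | succ m ih =>
      intro x hx
      have hm : (⟨(a.val + m) % n, Nat.mod_lt _ a.pos⟩ : Fin n) ∈ A := ih _ rfl
      have h2 := h _ hm
      have hx2 : x = fsucc ⟨(a.val + m) % n, Nat.mod_lt _ a.pos⟩ := by
        apply Fin.ext
        rw [fsucc_val]
        show x.val = ((a.val + m) % n + 1) % n
        rw [Nat.mod_add_mod, hx, Nat.add_assoc]
      rwa [hx2]
  apply Finset.eq_univ_iff_forall.mpr
  intro x
  apply key (x.val + n - a.val) x
  have hle : a.val ≤ x.val + n := by have := a.isLt; omega
  have : a.val + (x.val + n - a.val) = x.val + n := by omega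
  rw [this, Nat.add_mod_right, Nat.mod_eq_of_lt x.isLt]

lemma exists_exit (A : Finset (Fin n)) (hA : A.Nonempty) (hA' : A ≠ univ) :
    ∃ u ∈ A, fsucc u ∉ A := by
  by_contra h
  push_neg at h
  exact hA' (closure A hA h)

lemma exists_enter (A : Finset (Fin n)) (hA : A.Nonempty) (hA' : A ≠ univ) :
    ∃ u, u ∉ A ∧ fsucc u ∈ A := by
  have h1 : Aᶜ.Nonempty := by
    rw [← Finset.card_pos, Finset.card_compl]
    have : A.card < Fintype.card (Fin n) :=
      lt_of_le_of_ne (Finset.card_le_univ A) (fun h => hA' (Finset.card_eq_iff_eq_univ A |>.mp h))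
    omega
  have h2 : Aᶜ ≠ univ := by
    intro h
    obtain ⟨a, ha⟩ := hA
    have : a ∈ Aᶜ := h ▸ mem_univ a
    simp [Finset.mem_compl] at this
    exact this ha
  obtain ⟨u, hu, hu'⟩ := exists_exit Aᶜ h1 h2
  refine ⟨u, by simpa using hu, by simpa using hu'⟩

end CycleAux

namespace CycleAux

variable {n k : ℕ}

/-- the cycle strategy profile. -/
def cyc (n k : ℕ) : Fin n → Fin n → ℕ :=
  fun i j => if j.val = (i.val + 1) % n then k else 0

lemma cyc_eq (i j : Fin n) : cyc n k i j = if j = fsucc i then k else 0 := by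
  unfold cyc
  congr 1
  · simp [fsucc, Fin.ext_iff]

lemma cyc_succ (i : Fin n) : cyc n k i (fsucc i) = k := by
  rw [cyc_eq, if_pos rfl]

lemma cyc_diag (hn : 2 ≤ n) (i : Fin n) : cyc n k i i = 0 := by
  rw [cyc_eq, if_neg (fun h => fsucc_ne hn i h.symm)]

lemma sum_row (i : Fin n) : ∑ j, cyc n k i j = k := by
  simp only [cyc_eq]
  rw [Finset.sum_ite_eq' univ (fsucc i) (fun _ => k)]
  simp

lemma sum_col (i : Fin n) : ∑ j, cyc n k j i = k := by
  obtain ⟨j0, hj0⟩ := fsucc_surj i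
  rw [Finset.sum_eq_single_of_mem j0 (mem_univ _)]
  · rw [← hj0, cyc_succ]
  · intro j _ hne
    rw [cyc_eq, if_neg]
    intro h
    exact hne (fsucc_inj (hj0.trans h)).symm

lemma cap_diag_zero {V : Type*} (b : V → V → ℕ) (v : V) (h : b v v = 0) :
    cap b v v = 0 := by simp [cap, h]

lemma cutCap_singleton {V : Type*} [Fintype V] [DecidableEq V]
    (c : V → V → ℕ) (v : V) (h : c v v = 0) :
    cutCap c {v} = ∑ x, c v x := by
  unfold cutCap
  rw [Finset.sum_singleton]
  apply Finset.sum_subset (Finset.subset_univ _)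
  intro x _ hx
  simp only [Finset.mem_compl, Finset.mem_singleton, not_not] at hx
  rw [hx, h]

lemma singleton_ne_univ (hn : 2 ≤ n) (v : Fin n) : ({v} : Finset (Fin n)) ≠ univ := by
  intro h
  have h1 : (fsucc v) ∈ ({v} : Finset (Fin n)) := h ▸ mem_univ _
  simp only [Finset.mem_singleton] at h1
  exact fsucc_ne hn v h1

lemma sum_cap_cyc (hn : 2 ≤ n) (v : Fin n) : ∑ x, cap (cyc n k) v x = 2 * k := by
  unfold cap
  rw [Finset.sum_add_distrib, sum_row, sum_col]
  ring

lemma cutCap_cyc_singleton (hn : 2 ≤ n) (v : Fin n) :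
    cutCap (cap (cyc n k)) {v} = 2 * k := by
  rw [cutCap_singleton _ _ (cap_diag_zero _ _ (cyc_diag hn v)), sum_cap_cyc hn]

lemma cutCap_cyc_ge (hn : 2 ≤ n) (A : Finset (Fin n)) (hA : A.Nonempty)
    (hA' : A ≠ univ) : 2 * k ≤ cutCap (cap (cyc n k)) A := by
  unfold cutCap cap
  rw [two_mul]
  have h1 : k ≤ ∑ u ∈ A, ∑ x ∈ Aᶜ, cyc n k u x := by
    obtain ⟨u0, hu0, hexit⟩ := exists_exit A hA hA'
    calc k = cyc n k u0 (fsucc u0) := (cyc_succ u0).symm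
      _ ≤ ∑ x ∈ Aᶜ, cyc n k u0 x :=
        Finset.single_le_sum (fun _ _ => Nat.zero_le _) (by simpa using hexit)
      _ ≤ _ := Finset.single_le_sum (f := fun u => ∑ x ∈ Aᶜ, cyc n k u x)
        (fun _ _ => Nat.zero_le _) hu0
  have h2 : k ≤ ∑ u ∈ A, ∑ x ∈ Aᶜ, cyc n k x u := by
    obtain ⟨x0, hx0, henter⟩ := exists_enter A hA hA'
    calc k = cyc n k x0 (fsucc x0) := (cyc_succ x0).symm
      _ ≤ ∑ x ∈ Aᶜ, cyc n k x (fsucc x0) :=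
        Finset.single_le_sum (f := fun x => cyc n k x (fsucc x0))
          (fun _ _ => Nat.zero_le _) (Finset.mem_compl.mpr hx0)
      _ ≤ _ := Finset.single_le_sum (f := fun u => ∑ x ∈ Aᶜ, cyc n k x u)
        (fun _ _ => Nat.zero_le _) henter
  calc k + k ≤ _ + _ := Nat.add_le_add h1 h2
    _ = ∑ u ∈ A, ∑ x ∈ Aᶜ, (cyc n k u x + cyc n k x u) := by
      rw [← Finset.sum_add_distrib]
      apply Finset.sum_congr rfl
      intro u _
      rw [← Finset.sum_add_distrib]

lemma edgeConn_cyc (hn : 2 ≤ n) : edgeConn (cap (cyc n k)) = 2 * k := by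
  have hv : (2 * k) ∈ {m | ∃ A : Finset (Fin n), A.Nonempty ∧ A ≠ univ ∧
      cutCap (cap (cyc n k)) A = m} := by
    refine ⟨{⟨0, by omega⟩}, Finset.singleton_nonempty _, singleton_ne_univ hn _, ?_⟩
    exact cutCap_cyc_singleton hn _
  apply le_antisymm (Nat.sInf_le hv)
  apply le_csInf ⟨2 * k, hv⟩
  rintro m ⟨A, h1, h2, rfl⟩
  exact cutCap_cyc_ge hn A h1 h2

lemma localConn_le {V : Type*} [Fintype V] [DecidableEq V]
    (c : V → V → ℕ) (v w : V) (hne : w ≠ v) :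
    localConn c v w ≤ cutCap c {v} :=
  Nat.sInf_le ⟨{v}, Finset.mem_singleton_self v, by simp [hne], rfl⟩

lemma edgeConn_le_singleton {V : Type*} [Fintype V] [DecidableEq V]
    (c : V → V → ℕ) (v : V) (hne : ({v} : Finset V) ≠ univ) :
    edgeConn c ≤ cutCap c {v} :=
  Nat.sInf_le ⟨{v}, Finset.singleton_nonempty v, hne, rfl⟩

end CycleAux

open CycleAux

/-- The directed cycle in which every agent buys a single edge of capacity `k`
to the next agent is a Nash equilibrium of the min-flowNCG, and its social
utility (the edge connectivity of the network) is `2k`. -/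
theorem cycle_is_minNE (n k : ℕ) (hn : 3 ≤ n) (hk1 : 1 ≤ k) (hk : k < n) :
    MinNE k (fun i j : Fin n => if j.val = (i.val + 1) % n then k else 0) ∧
    edgeConn (cap (fun i j : Fin n => if j.val = (i.val + 1) % n then k else 0))
      = 2 * k := by
  have hn2 : 2 ≤ n := by omega
  have hb : (fun i j : Fin n => if j.val = (i.val + 1) % n then k else 0) = cyc n k := rfl
  rw [hb]
  refine ⟨⟨fun v => ⟨cyc_diag hn2 v, le_of_eq (sum_row v)⟩, ?_⟩, edgeConn_cyc hn2⟩
  intro v s hs0 hsk hlex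
  -- the deviated profile
  set b' := Function.update (cyc n k) v s with hb'
  -- key bound: the cut {v} in the deviated graph has capacity ≤ 2k
  have hdiag : cap b' v v = 0 := by
    simp [cap, hb', Function.update_self, hs0]
  have hcut : cutCap (cap b') {v} ≤ 2 * k := by
    rw [cutCap_singleton _ _ hdiag]
    have : ∑ x, cap b' v x = (∑ x, s x) + ∑ x, b' x v := by
      unfold cap
      rw [Finset.sum_add_distrib]
      congr 1
      simp [hb', Function.update_self]
    rw [this]
    have hcol : ∑ x, b' x v = k := by
      rw [← sum_col (k := k) v]
      apply Finset.sum_congr rfl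
      intro x _
      by_cases hx : x = v
      · subst hx
        simp [hb', Function.update_self, hs0, cyc_diag hn2]
      · simp [hb', Function.update_of_ne hx]
    rw [hcol]
    omega
  have hsingle : ({v} : Finset (Fin n)) ≠ univ := singleton_ne_univ hn2 v
  have hEC' : edgeConn (cap b') ≤ 2 * k :=
    le_trans (edgeConn_le_singleton _ v hsingle) hcut
  have hLC' : ∀ w : Fin n, w ≠ v → localConn (cap b') v w ≤ 2 * k :=
    fun w hw => le_trans (localConn_le _ v w hw) hcut
  -- original utility is (2k, 0)
  have hset : {w : Fin n | w ≠ v ∧ edgeConn (cap (cyc n k)) < localConn (cap (cyc n k)) v w}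
      = ∅ := by
    apply Set.eq_empty_iff_forall_notMem.mpr
    rintro w ⟨hw, hlt⟩
    have := le_trans (localConn_le (cap (cyc n k)) v w hw)
      (le_of_eq (cutCap_cyc_singleton hn2 v))
    rw [edgeConn_cyc hn2] at hlt
    omega
  have hmin : minUtil (cyc n k) v = (2 * k, 0) := by
    unfold minUtil
    rw [hset, Set.ncard_empty, edgeConn_cyc hn2]
  rw [hmin, Prod.lex_iff] at hlex
  rcases hlex with h | ⟨heq, hlt⟩
  · exact absurd h (by simp only [minUtil]; exact not_lt.mpr hEC')
  · -- second component of the deviated utility is 0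
    simp only [minUtil] at heq hlt
    have hset' : {w : Fin n | w ≠ v ∧ edgeConn (cap b') < localConn (cap b') v w} = ∅ := by
      apply Set.eq_empty_iff_forall_notMem.mpr
      rintro w ⟨hw, hlt'⟩
      have := hLC' w hw
      rw [← heq] at hlt'
      omega
    rw [hset', Set.ncard_empty] at hlt
    exact absurd hlt (lt_irrefl 0)
end
end

section
/- The Price of Stability of the min-flowNCG is 1: there exists a Nash equilibrium whose social utility equals the optimal social utility 2k. -/
/-!
Every agent buys at most `k`, so the weighted degrees of `cap b` sum to at most `2nk`; some vertex
has weighted degree at most `2k`, and its singleton cut bounds the edge connectivity. In the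
directed cycle of capacity `k` every nontrivial cut `A` is left by some edge `u → u + 1` and
entered by another, so `λ = 2k`. A deviating agent cannot raise `λ` above `2k`, and after the
deviation its own weighted degree is still at most `2k` (it still receives only `k`), so no node
is joined to it by more than `λ`: the second component of its utility is `0`.
-/

open Finset

noncomputable section

section Cuts

variable {V : Type*} [Fintype V] [DecidableEq V]

lemma cutCap_singleton {c : V → V → ℕ} {v : V} (hv : c v v = 0) :
    cutCap c {v} = wdeg c v := by
  rw [cutCap, sum_singleton, wdeg, ← sum_compl_add_sum {v}, sum_singleton, hv, add_zero]

lemma edgeConn_le_cutCap (c : V → V → ℕ) {A : Finset V} (hA : A.Nonempty) (hA' : A ≠ univ) :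
    edgeConn c ≤ cutCap c A :=
  Nat.sInf_le ⟨A, hA, hA', rfl⟩

lemma localConn_le_wdeg {c : V → V → ℕ} {v w : V} (hv : c v v = 0) (hw : w ≠ v) :
    localConn c v w ≤ wdeg c v :=
  cutCap_singleton hv ▸ Nat.sInf_le ⟨{v}, mem_singleton_self v, by simpa using hw, rfl⟩

lemma cutCap_cap (b : V → V → ℕ) (A : Finset V) :
    cutCap (cap b) A = cutCap b A + cutCap b Aᶜ := by
  simp only [cutCap, cap, sum_add_distrib, compl_compl]
  congr 1
  exact sum_comm

lemma wdeg_cap (b : V → V → ℕ) (v : V) :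
    wdeg (cap b) v = ∑ w, b v w + ∑ w, b w v :=
  sum_add_distrib

lemma Feasible.update {k : ℕ} {b : V → V → ℕ} (hb : Feasible k b) {v : V} {s : V → ℕ}
    (hs : s v = 0) (hsk : ∑ w, s w ≤ k) : Feasible k (Function.update b v s) := by
  intro u
  rcases eq_or_ne u v with rfl | hu
  · simpa using ⟨hs, hsk⟩
  · simpa [hu] using hb u

lemma Feasible.exists_wdeg_cap_le [Nonempty V] {k : ℕ} {b : V → V → ℕ} (hb : Feasible k b) :
    ∃ v, wdeg (cap b) v ≤ 2 * k := by
  have hsum : ∑ v, wdeg (cap b) v ≤ ∑ _v : V, 2 * k := by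
    calc ∑ v, wdeg (cap b) v = 2 * ∑ v, ∑ w, b v w := by
          simp only [wdeg_cap, sum_add_distrib, sum_comm (f := fun v w => b w v), two_mul]
      _ ≤ 2 * ∑ _v : V, k := Nat.mul_le_mul_left 2 (sum_le_sum fun v _ => (hb v).2)
      _ = ∑ _v : V, 2 * k := mul_sum _ _ _
  obtain ⟨v, -, hv⟩ := exists_le_of_sum_le univ_nonempty hsum
  exact ⟨v, hv⟩

lemma Feasible.edgeConn_cap_le [Nontrivial V] {k : ℕ} {b : V → V → ℕ} (hb : Feasible k b) :
    edgeConn (cap b) ≤ 2 * k := by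
  obtain ⟨v, hv⟩ := hb.exists_wdeg_cap_le
  calc edgeConn (cap b) ≤ cutCap (cap b) {v} :=
        edgeConn_le_cutCap _ (singleton_nonempty v) (singleton_ne_univ v)
    _ = wdeg (cap b) v := cutCap_singleton (by simp [cap, (hb v).1])
    _ ≤ 2 * k := hv

lemma wdeg_cap_update_le {k : ℕ} {b : V → V → ℕ} {v : V} (hin : ∑ w, b w v ≤ k) {s : V → ℕ}
    (hs : s v = 0) (hsk : ∑ w, s w ≤ k) : wdeg (cap (Function.update b v s)) v ≤ 2 * k := by
  have hin' : ∑ w, Function.update b v s w v ≤ k := by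
    refine le_trans (sum_le_sum fun w _ => ?_) hin
    rcases eq_or_ne w v with rfl | hw
    · simp [hs]
    · simp [hw]
  rw [wdeg_cap, Function.update_self]
  omega

theorem minNE_of_edgeConn_cap_eq [Nontrivial V] {k : ℕ} {b : V → V → ℕ} (hb : Feasible k b)
    (hin : ∀ v, ∑ w, b w v ≤ k) (hconn : edgeConn (cap b) = 2 * k) : MinNE k b := by
  refine ⟨hb, fun v s hs hsk hlex => ?_⟩
  set b' := Function.update b v s
  have hconn' : edgeConn (cap b') ≤ 2 * k := (hb.update hs hsk).edgeConn_cap_le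
  have hdeg : wdeg (cap b') v ≤ 2 * k := wdeg_cap_update_le (hin v) hs hsk
  rcases Prod.lex_def.mp hlex with hlt | ⟨heq, hlt⟩
  · exact absurd hlt (by simpa [minUtil, hconn] using hconn')
  · have hconn'' : edgeConn (cap b') = 2 * k := by simpa [minUtil, hconn] using heq.symm
    have hnone : {w | w ≠ v ∧ edgeConn (cap b') < localConn (cap b') v w} = ∅ := by
      refine Set.eq_empty_of_forall_notMem fun w ⟨hw, hgt⟩ => ?_
      have hloc := localConn_le_wdeg (c := cap b') (by simp [b', cap, hs]) hw
      omega
    simp [minUtil, b', hnone] at hlt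

end Cuts

section Cycle

open Fin.CommRing

variable {n : ℕ} [NeZero n]

def cycleProfile (n k : ℕ) [NeZero n] : Fin n → Fin n → ℕ :=
  fun v w => if w = v + 1 then k else 0

lemma exists_mem_add_one_notMem {A : Finset (Fin n)} (hA : A.Nonempty) (hA' : A ≠ univ) :
    ∃ u ∈ A, u + 1 ∉ A := by
  by_contra! h
  obtain ⟨a, ha⟩ := hA
  have hadd : ∀ m : ℕ, a + m ∈ A := by
    intro m
    induction m with
    | zero => simpa using ha
    | succ m ih => simpa [add_assoc] using h _ ih
  refine hA' (eq_univ_of_forall fun x => ?_)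
  simpa using hadd (x - a).val

lemma sum_cycleProfile_left (k : ℕ) (v : Fin n) : ∑ w, cycleProfile n k v w = k := by
  simp [cycleProfile]

lemma sum_cycleProfile_right (k : ℕ) (v : Fin n) : ∑ w, cycleProfile n k w v = k := by
  simp [cycleProfile, eq_comm (a := v), ← eq_sub_iff_add_eq]

lemma feasible_cycleProfile [Nontrivial (Fin n)] (k : ℕ) : Feasible k (cycleProfile n k) :=
  fun v => ⟨by simp [cycleProfile], (sum_cycleProfile_left k v).le⟩

lemma le_cutCap_cycleProfile (k : ℕ) {A : Finset (Fin n)} (hA : A.Nonempty) (hA' : A ≠ univ) :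
    k ≤ cutCap (cycleProfile n k) A := by
  obtain ⟨u, hu, hu'⟩ := exists_mem_add_one_notMem hA hA'
  calc k = cycleProfile n k u (u + 1) := by simp [cycleProfile]
    _ ≤ ∑ w ∈ Aᶜ, cycleProfile n k u w := single_le_sum (fun _ _ => Nat.zero_le _) (by simpa)
    _ ≤ cutCap (cycleProfile n k) A :=
        single_le_sum (f := fun u => ∑ w ∈ Aᶜ, cycleProfile n k u w) (fun _ _ => Nat.zero_le _) hu

lemma edgeConn_cap_cycleProfile [Nontrivial (Fin n)] (k : ℕ) :
    edgeConn (cap (cycleProfile n k)) = 2 * k := by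
  refine le_antisymm (feasible_cycleProfile k).edgeConn_cap_le
    (le_csInf ⟨_, {0}, singleton_nonempty 0, singleton_ne_univ 0, rfl⟩ ?_)
  rintro _ ⟨A, hA, hA', rfl⟩
  have hAc : Aᶜ.Nonempty := by simpa [nonempty_iff_ne_empty] using hA'
  have hAc' : Aᶜ ≠ univ := by simpa [← nonempty_iff_ne_empty] using hA
  rw [cutCap_cap, two_mul]
  exact add_le_add (le_cutCap_cycleProfile k hA hA') (le_cutCap_cycleProfile k hAc hAc')

end Cycle

theorem min_flow_PoS_eq_one_general (n k : ℕ) (hn : 3 ≤ n) :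
    (∀ b : Fin n → Fin n → ℕ, Feasible k b → edgeConn (cap b) ≤ 2 * k) ∧
    ∃ b : Fin n → Fin n → ℕ, MinNE k b ∧ edgeConn (cap b) = 2 * k := by
  have : NeZero n := ⟨by omega⟩
  have : Nontrivial (Fin n) := Fin.nontrivial_iff_two_le.mpr (by omega)
  refine ⟨fun b hb => hb.edgeConn_cap_le, cycleProfile n k, ?_, edgeConn_cap_cycleProfile k⟩
  exact minNE_of_edgeConn_cap_eq (feasible_cycleProfile k)
    (fun v => (sum_cycleProfile_right k v).le) (edgeConn_cap_cycleProfile k)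

/-- The Price of Stability of the min-flowNCG is 1: every feasible strategy
profile has social utility at most `2k`, and there is a Nash equilibrium whose
social utility equals the optimal social utility `2k`. -/
theorem min_flow_PoS_eq_one (n k : ℕ) (hn : 3 ≤ n) (hk1 : 1 ≤ k) (hk : k < n) :
    (∀ b : Fin n → Fin n → ℕ, Feasible k b → edgeConn (cap b) ≤ 2 * k) ∧
    ∃ b : Fin n → Fin n → ℕ, MinNE k b ∧ edgeConn (cap b) = 2 * k :=
  min_flow_PoS_eq_one_general n k hn
end
end

section
/- If G is a connected weighted graph where the total capacity of edges is exactly nk and every nontrivial cut has capacity at least k+1, then removing cuts of capacity at most k cannot partition G into n singleton components: formally, any edge-capacitated loopless graph on n vertices with total capacity ≥ nk admits a subset C of ≥ 2 vertices that cannot be separated within its induced subgraph by a cut of capacity ≤ k. -/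
open Finset

noncomputable section

lemma cluster_aux {V : Type*} [Fintype V] [DecidableEq V]
    (c : V → V → ℕ) (k : ℕ)
    (hsym : ∀ u v, c u v = c v u) (hloop : ∀ v, c v v = 0) :
    ∀ n (C : Finset V), C.card ≤ n →
      2 * (C.card - 1) * k < ∑ u ∈ C, ∑ v ∈ C, c u v →
      ∃ C' ⊆ C, 2 ≤ C'.card ∧
        ¬ ∃ B ⊆ C', B.Nonempty ∧ B ≠ C' ∧ (∑ u ∈ B, ∑ v ∈ C' \ B, c u v) ≤ k := by
  intro n
  induction n with
  | zero =>
    intro C hC hS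
    rw [Nat.le_zero, Finset.card_eq_zero] at hC
    subst hC
    simp at hS
  | succ n ih =>
    intro C hC hS
    by_cases hsep : ∃ B ⊆ C, B.Nonempty ∧ B ≠ C ∧ (∑ u ∈ B, ∑ v ∈ C \ B, c u v) ≤ k
    · obtain ⟨B, hBC, hBne, hBneC, hcut⟩ := hsep
      set D := C \ B with hD
      have hdisj : Disjoint B D := Finset.disjoint_sdiff
      have hUD : B ∪ D = C := Finset.union_sdiff_of_subset hBC
      have hDne : D.Nonempty := by
        rw [Finset.sdiff_nonempty]
        intro h
        exact hBneC (Finset.Subset.antisymm hBC h)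
      have hcards : B.card + D.card = C.card := by
        rw [← hUD, Finset.card_union_of_disjoint hdisj]
      have hb1 : 1 ≤ B.card := Finset.card_pos.mpr hBne
      have hd1 : 1 ≤ D.card := Finset.card_pos.mpr hDne
      have hBn : B.card ≤ n := by omega
      have hDn : D.card ≤ n := by omega
      -- split the sum
      have hcross : ∑ u ∈ D, ∑ v ∈ B, c u v = ∑ u ∈ B, ∑ v ∈ D, c u v := by
        rw [Finset.sum_comm]
        exact Finset.sum_congr rfl fun u _ => Finset.sum_congr rfl fun v _ => hsym v u
      have hsplit : ∑ u ∈ C, ∑ v ∈ C, c u v =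
          (∑ u ∈ B, ∑ v ∈ B, c u v) + (∑ u ∈ D, ∑ v ∈ D, c u v)
            + 2 * (∑ u ∈ B, ∑ v ∈ D, c u v) := by
        conv_lhs => rw [← hUD]
        rw [Finset.sum_union hdisj]
        simp_rw [Finset.sum_union hdisj, Finset.sum_add_distrib, hcross]
        ring
      -- one of the parts still has a big internal sum
      have key : 2 * (B.card - 1) * k < ∑ u ∈ B, ∑ v ∈ B, c u v ∨
          2 * (D.card - 1) * k < ∑ u ∈ D, ∑ v ∈ D, c u v := by
        by_contra h
        push_neg at h
        obtain ⟨h1, h2⟩ := h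
        have e1 : 2 * (C.card - 1) * k
            = 2 * (B.card - 1) * k + 2 * (D.card - 1) * k + 2 * k := by
          have : C.card - 1 = (B.card - 1) + (D.card - 1) + 1 := by omega
          rw [this]; ring
        omega
      rcases key with h | h
      · obtain ⟨C', hC'B, hc2, hns⟩ := ih B hBn h
        exact ⟨C', hC'B.trans hBC, hc2, hns⟩
      · obtain ⟨C', hC'D, hc2, hns⟩ := ih D hDn h
        exact ⟨C', hC'D.trans (Finset.sdiff_subset), hc2, hns⟩
    · refine ⟨C, Finset.Subset.refl _, ?_, hsep⟩
      by_contra h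
      push_neg at h
      interval_cases hcc : C.card
      · rw [Finset.card_eq_zero] at hcc; subst hcc; simp at hS
      · obtain ⟨v, hv⟩ := Finset.card_eq_one.mp hcc
        subst hv
        simp [hloop] at hS

/-- Any loopless edge-capacitated graph on `n ≥ 2` vertices of total capacity
at least `n·k` (double-counted sum at least `2·n·k`) admits a subset `C` of at
least two vertices that cannot be separated, within its induced subgraph, by a
cut of capacity at most `k`. -/
theorem exists_nonSeparable_cluster {V : Type*} [Fintype V] [DecidableEq V]
    (c : V → V → ℕ) (k : ℕ) (hk : 1 ≤ k) (hcard : 2 ≤ Fintype.card V)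
    (hsym : ∀ u v, c u v = c v u) (hloop : ∀ v, c v v = 0)
    (htot : 2 * Fintype.card V * k ≤ ∑ u, ∑ v, c u v) :
    ∃ C : Finset V, 2 ≤ C.card ∧
      ¬ ∃ B ⊆ C, B.Nonempty ∧ B ≠ C ∧ (∑ u ∈ B, ∑ v ∈ C \ B, c u v) ≤ k := by
  have hS : 2 * ((Finset.univ : Finset V).card - 1) * k < ∑ u ∈ Finset.univ, ∑ v ∈ Finset.univ, c u v := by
    have hcu : (Finset.univ : Finset V).card = Fintype.card V := Finset.card_univ
    have e1 : 2 * Fintype.card V * k = 2 * (Fintype.card V - 1) * k + 2 * k := by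
      have : Fintype.card V = (Fintype.card V - 1) + 1 := by omega
      conv_lhs => rw [this]
      ring
    rw [hcu]
    omega
  obtain ⟨C, _, hc2, hns⟩ := cluster_aux c k hsym hloop (Finset.univ.card) Finset.univ le_rfl hS
  exact ⟨C, hc2, hns⟩
end
end

section
/- A 2k-regular weighted graph (every vertex has weighted degree exactly 2k) that is the union of k directed Hamiltonian cycles achieves the maximum possible social utility 2k in both the min-flowNCG and avg-flowNCG; in particular, both its edge connectivity and every pairwise local edge connectivity equal 2k. -/
open Finset

noncomputable section

/-- The bought capacities of the strategy profile obtained by overlaying `k`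
directed Hamiltonian cycles: agent `u` buys one unit of capacity to `x` for
each cycle whose successor of `u` is `x`. -/
def hamProfile {V : Type*} [Fintype V] [DecidableEq V] {k : ℕ}
    (f : Fin k → Equiv.Perm V) : V → V → ℕ :=
  fun u x => (Finset.univ.filter fun i : Fin k => f i u = x).card


lemma exists_cross {V : Type*} [Fintype V] [DecidableEq V]
    (f : Equiv.Perm V) (hc : f.IsCycle) (hs : f.support = Finset.univ)
    (A : Finset V) (hA : A.Nonempty) (hA' : A ≠ Finset.univ) :
    ∃ u ∈ A, f u ∉ A := by
  by_contra h
  push_neg at h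
  have hpow : ∀ (n : ℕ) (a : V), a ∈ A → (f ^ n) a ∈ A := by
    intro n
    induction n with
    | zero => simp
    | succ n ih =>
      intro a ha
      rw [pow_succ, Equiv.Perm.mul_apply]
      exact ih _ (h a ha)
  obtain ⟨a, ha⟩ := hA
  obtain ⟨b, hb⟩ : ∃ b, b ∉ A := by
    by_contra hh
    push_neg at hh
    exact hA' (Finset.eq_univ_iff_forall.2 hh)
  have hfa : f a ≠ a := Equiv.Perm.mem_support.1 (by rw [hs]; exact Finset.mem_univ a)
  have hfb : f b ≠ b := Equiv.Perm.mem_support.1 (by rw [hs]; exact Finset.mem_univ b)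
  obtain ⟨n, hn⟩ := (hc.sameCycle hfa hfb).exists_pow_eq'
  exact hb (hn.2 ▸ hpow n a ha)

lemma swap3 {α β γ : Type*} (s : Finset α) (t : Finset β) (u : Finset γ)
    (g : α → β → γ → ℕ) :
    ∑ a ∈ s, ∑ b ∈ t, ∑ c ∈ u, g a b c = ∑ c ∈ u, ∑ a ∈ s, ∑ b ∈ t, g a b c := by
  calc ∑ a ∈ s, ∑ b ∈ t, ∑ c ∈ u, g a b c
      = ∑ a ∈ s, ∑ c ∈ u, ∑ b ∈ t, g a b c :=
        Finset.sum_congr rfl (fun a _ => Finset.sum_comm)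
    _ = ∑ c ∈ u, ∑ a ∈ s, ∑ b ∈ t, g a b c := Finset.sum_comm

section ham
variable {V : Type*} [Fintype V] [DecidableEq V] {k : ℕ} (f : Fin k → Equiv.Perm V)

lemma ham_sum_out (u : V) : ∑ x, hamProfile f u x = k := by
  unfold hamProfile
  rw [← Finset.card_eq_sum_card_fiberwise (f := fun i => f i u) (t := Finset.univ)
    (fun i _ => Finset.mem_univ _)]
  simp

lemma ham_sum_in (v : V) : ∑ w, hamProfile f w v = k := by
  unfold hamProfile
  simp only [Finset.card_filter]
  rw [Finset.sum_comm]
  have h1 : ∀ i : Fin k, ∑ w : V, (if f i w = v then 1 else 0) = 1 := by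
    intro i
    have he : ∀ w : V, f i w = v ↔ w = (f i)⁻¹ v := by
      intro w
      constructor
      · intro h; simp [← h]
      · intro h; simp [h]
    simp only [he]
    simp
  simp [h1]

lemma ham_expand (u v : V) :
    hamProfile f u v = ∑ i : Fin k, (if f i u = v then 1 else 0) := by
  unfold hamProfile; rw [Finset.card_filter]

lemma ham_cut_ge (hf : ∀ i, (f i).IsCycle ∧ (f i).support = Finset.univ)
    (A : Finset V) (hA : A.Nonempty) (hA' : A ≠ Finset.univ) :
    2 * k ≤ cutCap (cap (hamProfile f)) A := by
  have e1 : ∑ u ∈ A, ∑ v ∈ Aᶜ, hamProfile f u v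
      = ∑ i : Fin k, ∑ u ∈ A, (if f i u ∈ Aᶜ then 1 else 0) := by
    simp only [ham_expand]
    rw [swap3]
    refine Finset.sum_congr rfl (fun i _ => Finset.sum_congr rfl (fun u _ => ?_))
    rw [Finset.sum_ite_eq (Aᶜ) (f i u) (fun _ => 1)]
  have e2 : ∑ u ∈ A, ∑ v ∈ Aᶜ, hamProfile f v u
      = ∑ i : Fin k, ∑ v ∈ Aᶜ, (if f i v ∈ A then 1 else 0) := by
    simp only [ham_expand]
    rw [swap3]
    refine Finset.sum_congr rfl (fun i _ => ?_)
    rw [Finset.sum_comm]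
    refine Finset.sum_congr rfl (fun v _ => ?_)
    rw [Finset.sum_ite_eq A (f i v) (fun _ => 1)]
  have hS1 : k ≤ ∑ u ∈ A, ∑ v ∈ Aᶜ, hamProfile f u v := by
    rw [e1]
    calc k = ∑ _i : Fin k, 1 := by simp
    _ ≤ _ := by
        apply Finset.sum_le_sum
        intro i _
        obtain ⟨u, hu, hfu⟩ := exists_cross (f i) (hf i).1 (hf i).2 A hA hA'
        calc (1:ℕ) = ∑ u' ∈ ({u} : Finset V), (if f i u' ∈ Aᶜ then 1 else 0) := by
              rw [Finset.sum_singleton, if_pos (Finset.mem_compl.2 hfu)]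
        _ ≤ _ := Finset.sum_le_sum_of_subset (Finset.singleton_subset_iff.2 hu)
  have hS2 : k ≤ ∑ u ∈ A, ∑ v ∈ Aᶜ, hamProfile f v u := by
    have hAc : Aᶜ.Nonempty := by
      by_contra h
      rw [Finset.not_nonempty_iff_eq_empty] at h
      exact hA' (by simpa using congrArg compl h)
    have hAc' : Aᶜ ≠ Finset.univ := by
      intro h
      obtain ⟨a, ha⟩ := hA
      exact (Finset.mem_compl.1 (h ▸ Finset.mem_univ a)) ha
    rw [e2]
    calc k = ∑ _i : Fin k, 1 := by simp
    _ ≤ _ := by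
        apply Finset.sum_le_sum
        intro i _
        obtain ⟨v, hv, hfv⟩ := exists_cross (f i) (hf i).1 (hf i).2 Aᶜ hAc hAc'
        have hfvA : f i v ∈ A := by simpa using hfv
        calc (1:ℕ) = ∑ v' ∈ ({v} : Finset V), (if f i v' ∈ A then 1 else 0) := by
              rw [Finset.sum_singleton, if_pos hfvA]
        _ ≤ _ := Finset.sum_le_sum_of_subset (Finset.singleton_subset_iff.2 hv)
  have hsplit : cutCap (cap (hamProfile f)) A
      = (∑ u ∈ A, ∑ v ∈ Aᶜ, hamProfile f u v) + ∑ u ∈ A, ∑ v ∈ Aᶜ, hamProfile f v u := by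
    unfold cutCap cap
    simp [Finset.sum_add_distrib]
  rw [hsplit, two_mul]
  exact Nat.add_le_add hS1 hS2

lemma ham_wdeg (v : V) : wdeg (cap (hamProfile f)) v = 2 * k := by
  unfold wdeg cap
  rw [Finset.sum_add_distrib, ham_sum_out, ham_sum_in, two_mul]

lemma ham_cut_singleton (hf : ∀ i, (f i).IsCycle ∧ (f i).support = Finset.univ)
    (v : V) : cutCap (cap (hamProfile f)) {v} = 2 * k := by
  have hvv : cap (hamProfile f) v v = 0 := by
    unfold cap hamProfile
    have he : (Finset.univ.filter fun i : Fin k => f i v = v) = ∅ := by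
      ext i
      simp only [Finset.mem_filter, Finset.mem_univ, true_and, Finset.notMem_empty, iff_false]
      exact Equiv.Perm.mem_support.1 ((hf i).2 ▸ Finset.mem_univ v)
    simp [he]
  unfold cutCap
  rw [Finset.sum_singleton, Finset.compl_singleton, Finset.sum_erase _ hvv]
  exact ham_wdeg f v

end ham
/-- The network obtained by overlaying `k` directed Hamiltonian cycles is a
feasible profile (each agent spends out-capacity exactly `k`), is `2k`-regular
(every weighted degree is `2k`), and achieves the maximum possible social
utility `2k` in both the min-flowNCG and avg-flowNCG: every pairwise local
edge connectivity as well as the edge connectivity equals `2k`. -/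
theorem hamProfile_optimal {V : Type*} [Fintype V] [DecidableEq V]
    (k : ℕ) (hk1 : 1 ≤ k) (hcard : 3 ≤ Fintype.card V) (hk : k < Fintype.card V)
    (f : Fin k → Equiv.Perm V)
    (hf : ∀ i, (f i).IsCycle ∧ (f i).support = Finset.univ) :
    (∀ u : V, ∑ x, hamProfile f u x = k) ∧
    (∀ v : V, wdeg (cap (hamProfile f)) v = 2 * k) ∧
    (∀ v w : V, v ≠ w → localConn (cap (hamProfile f)) v w = 2 * k) ∧
    edgeConn (cap (hamProfile f)) = 2 * k := by
  have hlocal : ∀ v w : V, v ≠ w → localConn (cap (hamProfile f)) v w = 2 * k := by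
    intro v w hvw
    have hmem : 2 * k ∈ {m | ∃ A : Finset V, v ∈ A ∧ w ∉ A ∧ cutCap (cap (hamProfile f)) A = m} :=
      ⟨{v}, Finset.mem_singleton_self v, fun h => hvw (Finset.mem_singleton.1 h).symm,
        ham_cut_singleton f hf v⟩
    unfold localConn
    apply le_antisymm
    · exact Nat.sInf_le hmem
    · obtain ⟨A, hvA, hwA, hcut⟩ := Nat.sInf_mem (⟨_, hmem⟩ : Set.Nonempty _)
      rw [← hcut]
      exact ham_cut_ge f hf A ⟨v, hvA⟩ (fun h => hwA (h ▸ Finset.mem_univ w))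
  refine ⟨ham_sum_out f, ham_wdeg f, hlocal, ?_⟩
  have hnV : Nonempty V := Fintype.card_pos_iff.1 (by omega)
  obtain ⟨v⟩ := hnV
  have hne : ({v} : Finset V) ≠ Finset.univ := by
    intro h
    have := Finset.card_univ (α := V) ▸ congrArg Finset.card h
    simp at this
    omega
  have hmem : 2 * k ∈ {m | ∃ A : Finset V, A.Nonempty ∧ A ≠ Finset.univ ∧
      cutCap (cap (hamProfile f)) A = m} :=
    ⟨{v}, Finset.singleton_nonempty v, hne, ham_cut_singleton f hf v⟩
  unfold edgeConn
  apply le_antisymm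
  · exact Nat.sInf_le hmem
  · obtain ⟨A, hA, hA', hcut⟩ := Nat.sInf_mem (⟨_, hmem⟩ : Set.Nonempty _)
    rw [← hcut]
    exact ham_cut_ge f hf A hA hA'
end
end
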